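/- Let M be a right-bounded chain complex of R-modules (M_i = 0 for all i ≪ 0). If for every i the modules H_i(M) and M_i have finite projective dimension, then for every i the modules B_i(M) = im(∂_{i+1}), Z_i(M) = ker(∂_i), and C_i(M) = M_i/B_i(M) all have finite projective dimension. -/

import Mathlib

/-!
The boundaries, cycles and cokernels fit into short exact sequences
`0 → Z_i → M_i → B_{i-1} → 0`, `0 → B_i → Z_i → H_i → 0` and `0 → B_i → M_i → C_i → 0`.
By the long exact `Ext` sequence, if two terms of a short exact sequence have finite projective
dimension, so does the third. As `B_i = 0` for `i ≪ 0`, the first two sequences give finiteness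
of every `B_i` by induction on `i`, and then the first and third give it for `Z_i` and `C_i`.
-/

universe u

open CategoryTheory CategoryTheory.Limits CategoryTheory.Abelian

noncomputable instance hasDerCatModule (R : Type u) [CommRing R] :
    HasDerivedCategory.{u+1} (ModuleCat.{u} R) :=
  HasDerivedCategory.standard _

instance hasExtModule (R : Type u) [CommRing R] : HasExt.{u+1} (ModuleCat.{u} R) :=
  hasExt_of_hasDerivedCategory _

/-- Projective dimension of a module, valued in `ℕ∞`, via vanishing of `Ext`. -/
noncomputable def projDim (R : Type u) [CommRing R] (M : Type u) [AddCommGroup M]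
    [Module R M] : ℕ∞ :=
  sInf {n : ℕ∞ | ∀ (N : Type u) [AddCommGroup N] [Module R N] (i : ℕ), n < (i : ℕ∞) →
    Subsingleton (Abelian.Ext (ModuleCat.of R M) (ModuleCat.of R N) i)}

variable (R : Type u) [CommRing R]

/-- The boundary submodule `B_i(M) = im (∂_{i+1})` of a chain complex. -/
noncomputable def bdries (M : ChainComplex (ModuleCat.{u} R) ℤ) (i : ℤ) :
    Submodule R (M.X i) :=
  LinearMap.range (M.d (i + 1) i).hom

/-- The cycle submodule `Z_i(M) = ker (∂_i)` of a chain complex. -/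
noncomputable def cycs (M : ChainComplex (ModuleCat.{u} R) ℤ) (i : ℤ) :
    Submodule R (M.X i) :=
  LinearMap.ker (M.d i (i - 1)).hom

/-- The homology module `H_i(M) = Z_i(M)/B_i(M)`. -/
noncomputable def homol (M : ChainComplex (ModuleCat.{u} R) ℤ) (i : ℤ) : Type u :=
  cycs R M i ⧸ (Submodule.comap (cycs R M i).subtype (bdries R M i))

noncomputable instance (M : ChainComplex (ModuleCat.{u} R) ℤ) (i : ℤ) :
    AddCommGroup (homol R M i) := by unfold homol; infer_instance

noncomputable instance (M : ChainComplex (ModuleCat.{u} R) ℤ) (i : ℤ) :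
    Module R (homol R M i) := by unfold homol; infer_instance

namespace CategoryTheory.ShortComplex.ShortExact

variable {C : Type*} [Category C] [Abelian C] {S : ShortComplex C}

lemma exists_hasProjectiveDimensionLT_X₁ (hS : S.ShortExact)
    (h₂ : ∃ n, HasProjectiveDimensionLT S.X₂ n) (h₃ : ∃ n, HasProjectiveDimensionLT S.X₃ n) :
    ∃ n, HasProjectiveDimensionLT S.X₁ n := by
  obtain ⟨n₂, _⟩ := h₂
  obtain ⟨n₃, _⟩ := h₃
  exact ⟨max n₂ n₃, hS.hasProjectiveDimensionLT_X₁ _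
    (hasProjectiveDimensionLT_of_ge _ n₂ _ (le_max_left _ _))
    (hasProjectiveDimensionLT_of_ge _ n₃ _ (by omega))⟩

lemma exists_hasProjectiveDimensionLT_X₃ (hS : S.ShortExact)
    (h₁ : ∃ n, HasProjectiveDimensionLT S.X₁ n) (h₂ : ∃ n, HasProjectiveDimensionLT S.X₂ n) :
    ∃ n, HasProjectiveDimensionLT S.X₃ n := by
  obtain ⟨n₁, _⟩ := h₁
  obtain ⟨n₂, _⟩ := h₂
  exact ⟨max n₁ n₂ + 1, hS.hasProjectiveDimensionLT_X₃ _
    (hasProjectiveDimensionLT_of_ge _ n₁ _ (le_max_left _ _))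
    (hasProjectiveDimensionLT_of_ge _ n₂ _ (by omega))⟩

end CategoryTheory.ShortComplex.ShortExact

section ProjDim

variable {R} {A B : Type u} [AddCommGroup A] [Module R A] [AddCommGroup B] [Module R B]

lemma projDim_ne_top_iff :
    projDim R A ≠ ⊤ ↔ ∃ n, HasProjectiveDimensionLT (ModuleCat.of R A) n := by
  constructor
  · intro h
    rw [projDim, Ne, sInf_eq_top] at h
    push Not at h
    obtain ⟨m, hm, hm_ne_top⟩ := h
    refine ⟨m.toNat + 1, HasProjectiveDimensionLT.mk fun i hi N e => ?_⟩
    have := hm N i (by rw [← ENat.natCast_toNat hm_ne_top]; exact_mod_cast hi)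
    exact Subsingleton.elim _ _
  · rintro ⟨n, _⟩
    refine ne_top_of_le_ne_top (ENat.natCast_ne_top n) (sInf_le fun N _ _ i hi => ?_)
    exact HasProjectiveDimensionLT.subsingleton _ n i (by exact_mod_cast hi.le) _

lemma projDim_ne_top_of_subsingleton [Subsingleton A] : projDim R A ≠ ⊤ :=
  projDim_ne_top_iff.mpr ⟨0, (ModuleCat.isZero_of_subsingleton _).hasProjectiveDimensionLT_zero⟩

lemma projDim_ne_top_of_linearEquiv (e : A ≃ₗ[R] B) (h : projDim R A ≠ ⊤) : projDim R B ≠ ⊤ := by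
  obtain ⟨n, _⟩ := projDim_ne_top_iff.mp h
  exact projDim_ne_top_iff.mpr ⟨n, hasProjectiveDimensionLT_of_iso e.toModuleIso n⟩

lemma Submodule.shortExact_subtype_mkQ (p : Submodule R A) :
    (ModuleCat.shortComplexOfCompEqZero p.subtype p.mkQ
      (LinearMap.exact_subtype_mkQ p).linearMap_comp_eq_zero).ShortExact :=
  ModuleCat.shortComplex_shortExact _ (LinearMap.exact_subtype_mkQ p) p.injective_subtype
    p.mkQ_surjective

lemma projDim_submodule_ne_top (p : Submodule R A) (hA : projDim R A ≠ ⊤)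
    (hq : projDim R (A ⧸ p) ≠ ⊤) : projDim R p ≠ ⊤ :=
  projDim_ne_top_iff.mpr <| (p.shortExact_subtype_mkQ).exists_hasProjectiveDimensionLT_X₁
    (projDim_ne_top_iff.mp hA) (projDim_ne_top_iff.mp hq)

lemma projDim_quotient_ne_top (p : Submodule R A) (hp : projDim R p ≠ ⊤)
    (hA : projDim R A ≠ ⊤) : projDim R (A ⧸ p) ≠ ⊤ :=
  projDim_ne_top_iff.mpr <| (p.shortExact_subtype_mkQ).exists_hasProjectiveDimensionLT_X₃
    (projDim_ne_top_iff.mp hp) (projDim_ne_top_iff.mp hA)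

end ProjDim

section ChainComplex

variable {R} (M : ChainComplex (ModuleCat.{u} R) ℤ)

lemma bdries_eq_range {i j : ℤ} (hji : j + 1 = i) :
    bdries R M j = LinearMap.range (M.d i j).hom := by
  subst hji
  rfl

lemma bdries_le_cycs (i : ℤ) : bdries R M i ≤ cycs R M i := by
  rintro _ ⟨y, rfl⟩
  exact congr($(M.d_comp_d (i + 1) i (i - 1)).hom y)

variable {M}

lemma projDim_cycs_ne_top {i j : ℤ} (hji : j + 1 = i) (hB : projDim R (bdries R M j) ≠ ⊤)
    (hX : projDim R (M.X i) ≠ ⊤) : projDim R (cycs R M i) ≠ ⊤ := by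
  obtain rfl : j = i - 1 := by omega
  refine projDim_submodule_ne_top _ hX (projDim_ne_top_of_linearEquiv ?_ hB)
  exact (LinearEquiv.ofEq _ _ (bdries_eq_range M hji)).trans
    (M.d i (i - 1)).hom.quotKerEquivRange.symm

lemma projDim_bdries_ne_top {i : ℤ} (hZ : projDim R (cycs R M i) ≠ ⊤)
    (hH : projDim R (homol R M i) ≠ ⊤) : projDim R (bdries R M i) ≠ ⊤ :=
  projDim_ne_top_of_linearEquiv (Submodule.comapSubtypeEquivOfLe (bdries_le_cycs M i))
    (projDim_submodule_ne_top _ hZ hH)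

end ChainComplex

theorem projDim_cycles_bdries_coker_finite
    (M : ChainComplex (ModuleCat.{u} R) ℤ)
    (hbdd : ∃ n₀ : ℤ, ∀ i < n₀, Subsingleton (M.X i))
    (hH : ∀ i, projDim R (homol R M i) ≠ ⊤)
    (hX : ∀ i, projDim R (M.X i) ≠ ⊤) :
    ∀ i, projDim R (bdries R M i) ≠ ⊤ ∧ projDim R (cycs R M i) ≠ ⊤ ∧
      projDim R ((M.X i) ⧸ (bdries R M i)) ≠ ⊤ := by
  obtain ⟨n₀, hn₀⟩ := hbdd
  have hB_lt : ∀ i < n₀, projDim R (bdries R M i) ≠ ⊤ := fun i hi =>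
    have := hn₀ i hi
    projDim_ne_top_of_subsingleton
  have hB_ge : ∀ i ≥ n₀ - 1, projDim R (bdries R M i) ≠ ⊤ := by
    intro i hi
    induction i, hi using Int.leInduction with
    | base => exact hB_lt _ (by omega)
    | succ j _ hj => exact projDim_bdries_ne_top (projDim_cycs_ne_top rfl hj (hX _)) (hH _)
  have hB : ∀ i, projDim R (bdries R M i) ≠ ⊤ := fun i =>
    (lt_or_ge i n₀).elim (hB_lt i) fun hi => hB_ge i (by omega)
  exact fun i => ⟨hB i, projDim_cycs_ne_top (sub_add_cancel i 1) (hB (i - 1)) (hX i),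
    projDim_quotient_ne_top _ (hB i) (hX i)⟩
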